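/- Let K be a field, n ≥ 5, and N_1, N_2 the anti-isomorphic nilpotent semigroups N_1 = ⟨u,v | u^{n-1}=u^n, uv=u^{n-1}, vu=u^{n-2}, v^2=u^{n-2}⟩ and N_2 = ⟨u,v | u^{n-1}=u^n, uv=u^{n-2}, vu=u^{n-1}, v^2=u^{n-2}⟩. Then the contracted semigroup algebras K N_1 and K N_2 are isomorphic. -/

import Mathlib

/-- `sgPow S i` is the set `Sⁱ` of all products of `i` elements of `S`
(with the convention `S⁰ = S¹ = S`). -/
def sgPow (S : Type*) [Mul S] : ℕ → Set S
  | 0 => Set.univ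
  | 1 => Set.univ
  | n + 2 => Set.image2 (· * ·) (sgPow S (n + 1)) Set.univ

/-- A semigroup with zero is nilpotent of class `c` if `S^(c+1) = {0}` and `S^c ≠ {0}`. -/
def IsNilpotentOfClass (S : Type*) [SemigroupWithZero S] (c : ℕ) : Prop :=
  sgPow S (c + 1) = {0} ∧ sgPow S c ≠ {0}

/-- `mpow x i` is the power `xⁱ` in a magma, for `i ≥ 1` (with `mpow x 0 = x` by convention). -/
def mpow {S : Type*} [Mul S] (x : S) : ℕ → S
  | 0 => x
  | 1 => x
  | n + 2 => mpow x (n + 1) * x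
section AlgebraDefs

variable (K : Type*) [Field K] (A : Type*) [NonUnitalRing A] [Module K A]
  [SMulCommClass K A A] [IsScalarTower K A A]

/-- `algPow K A i` is the submodule `Aⁱ` spanned by all products of `i` elements
(with `A⁰ = A¹ = A`). -/
def algPow : ℕ → Submodule K A
  | 0 => ⊤
  | 1 => ⊤
  | n + 2 => Submodule.span K (Set.image2 (· * ·) ((algPow (n + 1) : Submodule K A) : Set A) Set.univ)

/-- The dimension of the layer `Aⁱ/Aⁱ⁺¹`. -/
noncomputable def algLayerDim (i : ℕ) : ℕ :=
  Module.finrank K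
    (↥(algPow K A i) ⧸ (algPow K A (i + 1)).comap (algPow K A i).subtype)

/-- The coclass of the nilpotent quotient `A/Aⁱ`, namely `dim (A/Aⁱ) - (i - 1)`. -/
noncomputable def algCcQuot (i : ℕ) : ℕ :=
  Module.finrank K (A ⧸ algPow K A i) - (i - 1)

/-- A finitely generated residually nilpotent algebra has coclass `r` if the coclasses
of its nilpotent quotients `A/Aⁱ` converge to `r`. -/
def HasCoclassAlg (r : ℕ) : Prop :=
  ∀ᶠ i in Filter.atTop, algCcQuot K A i = r

/-- The two-sided annihilator of an algebra, as a submodule. -/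
def twoSidedAnn : Submodule K A where
  carrier := {a | (∀ b, a * b = 0) ∧ ∀ b, b * a = 0}
  add_mem' := by
    intro a b ha hb
    exact ⟨fun c => by rw [add_mul, ha.1 c, hb.1 c, add_zero],
           fun c => by rw [mul_add, ha.2 c, hb.2 c, add_zero]⟩
  zero_mem' := ⟨fun b => zero_mul b, fun b => mul_zero b⟩
  smul_mem' := by
    intro k a ha
    exact ⟨fun b => by rw [smul_mul_assoc, ha.1 b, smul_zero],
           fun b => by rw [mul_smul_comm, ha.2 b, smul_zero]⟩

/-- The right annihilator of an algebra, as a submodule. -/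
def rightAnn : Submodule K A where
  carrier := {a | ∀ b, b * a = 0}
  add_mem' := by
    intro a b ha hb c
    rw [mul_add, ha c, hb c, add_zero]
  zero_mem' := fun b => mul_zero b
  smul_mem' := by
    intro k a ha b
    rw [mul_smul_comm, ha b, smul_zero]

end AlgebraDefs

/-- `IsContractedAlgebra K f` asserts that `f : S → A` exhibits the algebra `A` as the
contracted semigroup algebra of the semigroup-with-zero `S` over the field `K`:
`f` is multiplicative, sends zero to zero, and the images of the non-zero elements
of `S` form a `K`-basis of `A`. -/
def IsContractedAlgebra (K : Type*) [Field K] {S A : Type*} [SemigroupWithZero S]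
    [NonUnitalRing A] [Module K A] (f : S → A) : Prop :=
  f 0 = 0 ∧ (∀ s t : S, f (s * t) = f s * f t) ∧
  LinearIndependent K (fun s : {s : S // s ≠ 0} => f s.1) ∧
  Submodule.span K (Set.range fun s : {s : S // s ≠ 0} => f s.1) = ⊤
/-- `IsCC1Sg n a b c S u v` asserts that `S` is the nilpotent semigroup of order `n`
with zero given by the presentation
`⟨u, v ∣ u^(n-1) = u^n, u*v = u^a, v*u = u^b, v*v = u^c⟩`:
its distinct elements are `u, u², …, u^(n-2), v` and the zero `u^(n-1)`. -/
def IsCC1Sg (n a b c : ℕ) (S : Type*) [SemigroupWithZero S] (u v : S) : Prop :=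
  mpow u (n - 1) = 0 ∧ u * v = mpow u a ∧ v * u = mpow u b ∧ v * v = mpow u c ∧
  v ≠ 0 ∧ (∀ i, 1 ≤ i → i ≤ n - 2 → mpow u i ≠ 0) ∧
  (∀ i j, 1 ≤ i → i ≤ n - 2 → 1 ≤ j → j ≤ n - 2 → mpow u i = mpow u j → i = j) ∧
  (∀ i, 1 ≤ i → i ≤ n - 2 → v ≠ mpow u i) ∧
  (∀ s : S, s = 0 ∨ s = v ∨ ∃ i, 1 ≤ i ∧ i ≤ n - 2 ∧ s = mpow u i)

/-!
In `K N₂` put `x = u` and `y = u^(n-3) - v`. Since `n ≥ 5`, the products `u^(n-3) u^(n-3)`,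
`u^(n-3) v` and `v u^(n-3)` all vanish, and expanding shows that `x, y` satisfy the defining
relations of `N₁`; symmetrically in `K N₁`. The universal properties of the presentation and of
the contracted semigroup algebra turn these into algebra maps `K N₁ → K N₂ → K N₁`, which are
mutually inverse because they are so on `u` and `v`.
-/

section Mpow

variable {S : Type*}

lemma mpow_succ [Mul S] (x : S) {i : ℕ} (hi : 1 ≤ i) : mpow x (i + 1) = mpow x i * x := by
  obtain ⟨k, rfl⟩ : ∃ k, i = k + 1 := ⟨i - 1, by omega⟩
  rfl

lemma map_mpow {R F : Type*} [Mul S] [Mul R] [FunLike F S R] [MulHomClass F S R] (φ : F)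
    (x : S) (i : ℕ) : φ (mpow x i) = mpow (φ x) i := by
  induction i with
  | zero => rfl
  | succ i ih =>
    rcases Nat.eq_zero_or_pos i with rfl | hi
    · rfl
    · rw [mpow_succ x hi, mpow_succ (φ x) hi, map_mul, ih]

lemma mpow_add [Semigroup S] (x : S) {i j : ℕ} (hi : 1 ≤ i) (hj : 1 ≤ j) :
    mpow x i * mpow x j = mpow x (i + j) := by
  induction j, hj using Nat.le_induction with
  | base => exact (mpow_succ x hi).symm
  | succ j hj ih =>
    rw [mpow_succ x hj, ← mul_assoc, ih, ← mpow_succ x (by omega), Nat.add_assoc]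

lemma self_mul_mpow [Semigroup S] (x : S) {i : ℕ} (hi : 1 ≤ i) :
    x * mpow x i = mpow x (i + 1) :=
  (mpow_add x le_rfl hi).trans (by rw [Nat.add_comm])

lemma mpow_eq_zero_of_le [SemigroupWithZero S] {x : S} {m i : ℕ} (h : mpow x m = 0)
    (hmi : m ≤ i) : mpow x i = 0 := by
  induction i, hmi using Nat.le_induction with
  | base => exact h
  | succ i _ ih =>
    rcases Nat.eq_zero_or_pos i with rfl | hi
    · exact ih
    · rw [mpow_succ x hi, ih, zero_mul]

lemma mpow_mul_of_mul_eq [Semigroup S] {x y : S} {a i : ℕ} (hxy : x * y = mpow x a) (ha : 1 ≤ a)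
    (hi : 1 ≤ i) : mpow x i * y = mpow x (i + a - 1) := by
  rcases Nat.eq_or_lt_of_le hi with rfl | hi
  · rw [Nat.add_sub_cancel_left]; exact hxy
  · obtain ⟨k, hk, rfl⟩ : ∃ k, 1 ≤ k ∧ i = k + 1 := ⟨i - 1, by omega, by omega⟩
    rw [mpow_succ x hk, mul_assoc, hxy, mpow_add x hk ha]
    congr 1; omega

lemma mul_mpow_of_mul_eq [Semigroup S] {x y : S} {b i : ℕ} (hyx : y * x = mpow x b) (hb : 1 ≤ b)
    (hi : 1 ≤ i) : y * mpow x i = mpow x (b + i - 1) := by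
  rcases Nat.eq_or_lt_of_le hi with rfl | hi
  · rw [Nat.add_sub_cancel]; exact hyx
  · obtain ⟨k, hk, rfl⟩ : ∃ k, 1 ≤ k ∧ i = k + 1 := ⟨i - 1, by omega, by omega⟩
    rw [← self_mul_mpow x hk, ← mul_assoc, hyx, mpow_add x hb hk, Nat.add_succ_sub_one]

end Mpow

def CC1Relations {R : Type*} [Mul R] [Zero R] (n a b c : ℕ) (x y : R) : Prop :=
  mpow x (n - 1) = 0 ∧ x * y = mpow x a ∧ y * x = mpow x b ∧ y * y = mpow x c

namespace CC1Relations

variable {n a b c : ℕ}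

lemma map {S R F : Type*} [SemigroupWithZero S] [SemigroupWithZero R] [FunLike F S R]
    [MulHomClass F S R] {u v : S} (h : CC1Relations n a b c u v) (φ : F) (hφ : φ 0 = 0) :
    CC1Relations n a b c (φ u) (φ v) := by
  obtain ⟨hu, huv, hvu, hvv⟩ := h
  refine ⟨?_, ?_, ?_, ?_⟩ <;>
    simp only [← map_mul, ← map_mpow, hu, huv, hvu, hvv, hφ]

/-- Turns the relations of `N₂` into those of `N₁` and vice versa. -/
lemma dual {R : Type*} [NonUnitalRing R] {x y : R} (hn : 5 ≤ n) (hab : a + b = 2 * n - 3)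
    (ha : n - 2 ≤ a) (hb : n - 2 ≤ b) (h : CC1Relations n a b (n - 2) x y) :
    CC1Relations n b a (n - 2) x (mpow x (n - 3) - y) := by
  obtain ⟨hx, hxy, hyx, hyy⟩ := h
  have hzero : ∀ i, n - 1 ≤ i → mpow x i = 0 := fun i hi => mpow_eq_zero_of_le hx hi
  have hxw : x * mpow x (n - 3) = mpow x (n - 2) :=
    (self_mul_mpow x (by omega)).trans (by congr 1; omega)
  have hwx : mpow x (n - 3) * x = mpow x (n - 2) :=
    (mpow_succ x (by omega)).symm.trans (by congr 1; omega)
  -- `2 (n - 3) ≥ n - 1` is where `n ≥ 5` is needed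
  have hww : mpow x (n - 3) * mpow x (n - 3) = 0 := by
    rw [mpow_add x (by omega) (by omega), hzero _ (by omega)]
  have hwy : mpow x (n - 3) * y = 0 := by
    rw [mpow_mul_of_mul_eq hxy (by omega) (by omega), hzero _ (by omega)]
  have hyw : y * mpow x (n - 3) = 0 := by
    rw [mul_mpow_of_mul_eq hyx (by omega) (by omega), hzero _ (by omega)]
  refine ⟨hx, ?_, ?_, ?_⟩
  · rw [mul_sub, hxw, hxy]
    obtain rfl | rfl : a = n - 2 ∨ a = n - 1 := by omega
    · rw [sub_self, hzero b (by omega)]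
    · rw [hzero (n - 1) le_rfl, sub_zero]; congr 1; omega
  · rw [sub_mul, hwx, hyx]
    obtain rfl | rfl : b = n - 2 ∨ b = n - 1 := by omega
    · rw [sub_self, hzero a (by omega)]
    · rw [hzero (n - 1) le_rfl, sub_zero]; congr 1; omega
  · rw [sub_mul, mul_sub, mul_sub, hww, hwy, hyw, hyy]
    abel

end CC1Relations

namespace IsCC1Sg

variable {n a b c : ℕ} {S : Type*} [SemigroupWithZero S] {u v : S}

lemma cc1Relations (h : IsCC1Sg n a b c S u v) : CC1Relations n a b c u v :=
  ⟨h.1, h.2.1, h.2.2.1, h.2.2.2.1⟩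

lemma eq_zero_or_eq_v_or_eq_mpow (h : IsCC1Sg n a b c S u v) (s : S) :
    s = 0 ∨ s = v ∨ ∃ i, 1 ≤ i ∧ i ≤ n - 2 ∧ s = mpow u i :=
  h.2.2.2.2.2.2.2.2 s

lemma mulHom_ext {R F : Type*} [Mul R] [FunLike F S R] [MulHomClass F S R]
    (h : IsCC1Sg n a b c S u v) {φ ψ : F} (hu : φ u = ψ u) (hv : φ v = ψ v) : φ = ψ := by
  refine DFunLike.ext _ _ fun s => ?_
  rcases h.eq_zero_or_eq_v_or_eq_mpow s with rfl | rfl | ⟨i, -, -, rfl⟩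
  · rw [← h.1, map_mpow, map_mpow, hu]
  · exact hv
  · rw [map_mpow, map_mpow, hu]

section Lift

variable {R : Type*} [SemigroupWithZero R] (x y : R)

open Classical in
noncomputable def liftFun (n : ℕ) (u v : S) (s : S) : R :=
  if s = v then y
  else if hs : ∃ i, 1 ≤ i ∧ i ≤ n - 2 ∧ s = mpow u i then mpow x hs.choose else 0

variable {x y}

lemma liftFun_v : liftFun x y n u v v = y := if_pos rfl

lemma liftFun_mpow (h : IsCC1Sg n a b c S u v) (hxy : CC1Relations n a b c x y) (i : ℕ) :
    liftFun x y n u v (mpow u i) = mpow x i := by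
  obtain ⟨hu0, -, -, -, hv0, hne, hinj, hvne, -⟩ := h
  wlog hi : 1 ≤ i generalizing i
  · obtain rfl : i = 0 := by omega
    exact this 1 le_rfl
  rcases le_or_gt i (n - 2) with hin | hin
  · have hs : ∃ j, 1 ≤ j ∧ j ≤ n - 2 ∧ mpow u i = mpow u j := ⟨i, hi, hin, rfl⟩
    obtain ⟨hj1, hjn, hj⟩ := hs.choose_spec
    rw [liftFun, if_neg (hvne i hi hin).symm, dif_pos hs, ← hinj i _ hi hin hj1 hjn hj]
  · have hs : ¬ ∃ j, 1 ≤ j ∧ j ≤ n - 2 ∧ (0 : S) = mpow u j :=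
      fun ⟨j, hj1, hjn, hj⟩ => hne j hj1 hjn hj.symm
    rw [mpow_eq_zero_of_le hu0 (by omega), liftFun, if_neg hv0.symm, dif_neg hs,
      mpow_eq_zero_of_le hxy.1 (by omega)]

lemma liftFun_zero (h : IsCC1Sg n a b c S u v) (hxy : CC1Relations n a b c x y) :
    liftFun x y n u v 0 = 0 := by
  rw [← h.1, liftFun_mpow h hxy, hxy.1]

lemma exists_mulHom (h : IsCC1Sg n a b c S u v) (ha : 1 ≤ a) (hb : 1 ≤ b)
    (hxy : CC1Relations n a b c x y) :
    ∃ φ : S →ₙ* R, φ 0 = 0 ∧ φ u = x ∧ φ v = y := by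
  have hmpow := liftFun_mpow h hxy
  have hzero := liftFun_zero h hxy
  refine ⟨⟨liftFun x y n u v, fun s t => ?_⟩, hzero, hmpow 1, liftFun_v⟩
  have hcls := h.eq_zero_or_eq_v_or_eq_mpow
  obtain ⟨-, huv, hvu, hvv⟩ := h.cc1Relations
  rcases hcls s with rfl | rfl | ⟨i, hi, -, rfl⟩
  · rw [zero_mul, hzero, zero_mul]
  all_goals rcases hcls t with rfl | rfl | ⟨j, hj, -, rfl⟩
  any_goals rw [mul_zero, hzero, mul_zero]
  · rw [hvv, hmpow, liftFun_v, hxy.2.2.2]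
  · rw [mul_mpow_of_mul_eq hvu hb hj, hmpow, hmpow, liftFun_v,
      mul_mpow_of_mul_eq hxy.2.2.1 hb hj]
  · rw [mpow_mul_of_mul_eq huv ha hi, hmpow, hmpow, liftFun_v,
      mpow_mul_of_mul_eq hxy.2.1 ha hi]
  · rw [mpow_add u hi hj, hmpow, hmpow, hmpow, mpow_add x hi hj]

end Lift

end IsCC1Sg

namespace IsContractedAlgebra

variable {K : Type*} [Field K] {S : Type*} [SemigroupWithZero S]
  {A : Type*} [NonUnitalRing A] [Module K A] {f : S → A}

noncomputable def basis (hf : IsContractedAlgebra K f) : Module.Basis {s : S // s ≠ 0} K A :=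
  Module.Basis.mk hf.2.2.1 hf.2.2.2.ge

lemma basis_apply (hf : IsContractedAlgebra K f) (s : {s : S // s ≠ 0}) : hf.basis s = f s :=
  Module.Basis.mk_apply _ _ s

def mulHom (hf : IsContractedAlgebra K f) : S →ₙ* A := ⟨f, hf.2.1⟩

lemma mulHom_apply (hf : IsContractedAlgebra K f) (s : S) : hf.mulHom s = f s := rfl

lemma nonUnitalAlgHom_ext {C : Type*} [NonUnitalRing C] [Module K C]
    (hf : IsContractedAlgebra K f) {e₁ e₂ : A →ₙₐ[K] C} (h : ∀ s, e₁ (f s) = e₂ (f s)) :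
    e₁ = e₂ :=
  DFunLike.ext _ _ fun x => LinearMap.congr_fun
    (hf.basis.ext (f₁ := LinearMapClass.linearMap e₁) (f₂ := LinearMapClass.linearMap e₂)
      fun s => by simpa [basis_apply] using h s) x

variable [SMulCommClass K A A] [IsScalarTower K A A]
  {B : Type*} [NonUnitalRing B] [Module K B] [SMulCommClass K B B] [IsScalarTower K B B]

lemma exists_nonUnitalAlgHom (hf : IsContractedAlgebra K f) (φ : S →ₙ* B) (hφ : φ 0 = 0) :
    ∃ e : A →ₙₐ[K] B, ∀ s, e (f s) = φ s := by
  set L : A →ₗ[K] B := hf.basis.constr K fun s => φ s.1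
  have hL : ∀ s, L (f s) = φ s := by
    intro s
    by_cases hs : s = 0
    · rw [hs, hf.1, map_zero, hφ]
    · simpa [basis_apply] using hf.basis.constr_basis K (fun s => φ s.1) ⟨s, hs⟩
  have hmul : (LinearMap.mul K A).compr₂ L = (LinearMap.mul K B).compl₁₂ L L := by
    refine hf.basis.ext fun s => hf.basis.ext fun t => ?_
    simp only [LinearMap.compr₂_apply, LinearMap.compl₁₂_apply, LinearMap.mul_apply',
      basis_apply, ← hf.2.1, hL, map_mul]
  refine ⟨{ L with
    map_zero' := map_zero L
    map_mul' := fun x y => LinearMap.congr_fun₂ hmul x y }, hL⟩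

end IsContractedAlgebra

lemma IsCC1Sg.nonUnitalAlgHom_ext {n a b c : ℕ} {K S A C : Type*} [Field K] [SemigroupWithZero S]
    [NonUnitalRing A] [Module K A] [NonUnitalRing C] [Module K C] {u v : S} {f : S → A}
    (h : IsCC1Sg n a b c S u v) (hf : IsContractedAlgebra K f) {e₁ e₂ : A →ₙₐ[K] C}
    (hu : e₁ (f u) = e₂ (f u)) (hv : e₁ (f v) = e₂ (f v)) : e₁ = e₂ :=
  hf.nonUnitalAlgHom_ext fun s => DFunLike.congr_fun
    (h.mulHom_ext (φ := (e₁ : A →ₙ* C).comp hf.mulHom) (ψ := (e₂ : A →ₙ* C).comp hf.mulHom)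
      hu hv) s

/-- For a field `K` and `n ≥ 5`, the contracted semigroup algebras `K N₁` and `K N₂` of
the anti-isomorphic semigroups
`N₁ = ⟨u,v ∣ u^(n-1) = uⁿ, u*v = u^(n-1), v*u = u^(n-2), v² = u^(n-2)⟩` and
`N₂ = ⟨u,v ∣ u^(n-1) = uⁿ, u*v = u^(n-2), v*u = u^(n-1), v² = u^(n-2)⟩`
are isomorphic. -/
theorem statement14 {K : Type*} [Field K] (n : ℕ) (hn : 5 ≤ n)
    {S₁ : Type*} [SemigroupWithZero S₁] (u₁ v₁ : S₁)
    (h₁ : IsCC1Sg n (n - 1) (n - 2) (n - 2) S₁ u₁ v₁)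
    {S₂ : Type*} [SemigroupWithZero S₂] (u₂ v₂ : S₂)
    (h₂ : IsCC1Sg n (n - 2) (n - 1) (n - 2) S₂ u₂ v₂)
    {A : Type*} [NonUnitalRing A] [Module K A] [SMulCommClass K A A] [IsScalarTower K A A]
    {B : Type*} [NonUnitalRing B] [Module K B] [SMulCommClass K B B] [IsScalarTower K B B]
    (f : S₁ → A) (hf : IsContractedAlgebra K f)
    (g : S₂ → B) (hg : IsContractedAlgebra K g) :
    ∃ e : A →ₙₐ[K] B, Function.Bijective e := by
  have hA := h₁.cc1Relations.map hf.mulHom hf.1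
  have hB := h₂.cc1Relations.map hg.mulHom hg.1
  simp only [IsContractedAlgebra.mulHom_apply] at hA hB
  obtain ⟨φ, hφ0, hφu, hφv⟩ :=
    h₁.exists_mulHom (by omega) (by omega) (hB.dual hn (by omega) le_rfl (by omega))
  obtain ⟨ψ, hψ0, hψu, hψv⟩ :=
    h₂.exists_mulHom (by omega) (by omega) (hA.dual hn (by omega) (by omega) le_rfl)
  obtain ⟨e, he⟩ := hf.exists_nonUnitalAlgHom φ hφ0
  obtain ⟨e', he'⟩ := hg.exists_nonUnitalAlgHom ψ hψ0
  have hleft : e'.comp e = NonUnitalAlgHom.id K A := by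
    refine h₁.nonUnitalAlgHom_ext hf ?_ ?_ <;>
      simp only [NonUnitalAlgHom.comp_apply, NonUnitalAlgHom.coe_id, id, he, hφu, hφv, map_sub,
        map_mpow, he', hψu, hψv, sub_sub_cancel]
  have hright : e.comp e' = NonUnitalAlgHom.id K B := by
    refine h₂.nonUnitalAlgHom_ext hg ?_ ?_ <;>
      simp only [NonUnitalAlgHom.comp_apply, NonUnitalAlgHom.coe_id, id, he, hφu, hφv, map_sub,
        map_mpow, he', hψu, hψv, sub_sub_cancel]
  exact ⟨e, Function.bijective_iff_has_inverse.2
    ⟨e', DFunLike.congr_fun hleft, DFunLike.congr_fun hright⟩⟩
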